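/- arXiv:1605.04433 — 3 statements merged into one kernel-verified Lean document; each statement's English description precedes it below -/
import Mathlib

section
/- With Λ and E₇ ⊂ E₈ as above, for any root α of E₇ one has Ω(−α) = {δ − λ : λ ∈ Ω(α)}, where Ω(β) = {λ ∈ Λ : λ − β ∈ Λ} and δ is the highest root of E₈. -/
open Finset

/-- Ambient 8-dimensional rational space in which E₈ is realized. -/
abbrev V8 : Type := Fin 8 → ℚ

/-- The standard inner product on `V8`; roots of E₈ have squared length 2 in it. -/
def stdInner (x y : V8) : ℚ := ∑ i, x i * y i

/-- The inner product normalized so that all roots of E₈ have length 1. -/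
def nip (x y : V8) : ℚ := stdInner x y / 2

/-- `v` is a root of E₈ in the standard coordinate realization:
either all coordinates are integers, or all are half-odd-integers;
the squared length is 2 and the coordinate sum is an even integer. -/
def IsE8Root (v : V8) : Prop :=
  stdInner v v = 2 ∧
  ((∀ i, ∃ n : ℤ, v i = n) ∨ (∀ i, ∃ n : ℤ, v i = n + 1/2)) ∧
  (∃ n : ℤ, (∑ i, v i) = 2 * n)

/-- The simple roots α₁,…,α₈ of E₈ in Bourbaki numbering (index `i` is αᵢ₊₁). -/
def simpleRoot : Fin 8 → V8 :=
  ![![1/2, -1/2, -1/2, -1/2, -1/2, -1/2, -1/2, 1/2],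
    ![1, 1, 0, 0, 0, 0, 0, 0],
    ![-1, 1, 0, 0, 0, 0, 0, 0],
    ![0, -1, 1, 0, 0, 0, 0, 0],
    ![0, 0, -1, 1, 0, 0, 0, 0],
    ![0, 0, 0, -1, 1, 0, 0, 0],
    ![0, 0, 0, 0, -1, 1, 0, 0],
    ![0, 0, 0, 0, 0, -1, 1, 0]]

/-- `c` is the coordinate vector of `v` in the basis of simple roots of E₈. -/
def HasCoords (v : V8) (c : Fin 8 → ℚ) : Prop := v = ∑ i, c i • simpleRoot i

/-- The set Λ of roots of E₈ whose α₈-coefficient equals 1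
(the weights of the 56-dimensional representation of E₇). -/
def LambdaE7 : Set V8 := {v | IsE8Root v ∧ ∃ c, HasCoords v c ∧ c 7 = 1}

/-- E₇ embedded in E₈ as the set of roots with α₈-coefficient 0. -/
def E7 : Set V8 := {v | IsE8Root v ∧ ∃ c, HasCoords v c ∧ c 7 = 0}

/-- The highest root δ of E₈ (equal to e₇ + e₈ in standard coordinates). -/
def deltaE8 : V8 := ![0, 0, 0, 0, 0, 0, 1, 1]

/-- For a root α of E₇, the maximal square Ω(α) = {λ ∈ Λ : λ − α ∈ Λ}. -/
def Omega (a : V8) : Set V8 := {l | l ∈ LambdaE7 ∧ l - a ∈ LambdaE7}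

/-!
For λ ∈ Λ the normalized product of δ and λ is 1/2, so δ − λ is the reflection of δ in λ, again
a root, and its α₈-coefficient is 2 − 1 = 1. Hence λ ↦ δ − λ is an involution of Λ, and it turns
the condition λ − α ∈ Λ into (δ − λ) + α ∈ Λ.
-/

def InE8Lattice (v : V8) : Prop :=
  ((∀ i, ∃ n : ℤ, v i = n) ∨ (∀ i, ∃ n : ℤ, v i = n + 1/2)) ∧ ∃ n : ℤ, ∑ i, v i = 2 * n

lemma isE8Root_iff (v : V8) : IsE8Root v ↔ stdInner v v = 2 ∧ InE8Lattice v := Iff.rfl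

lemma InE8Lattice.sub {v w : V8} (hv : InE8Lattice v) (hw : InE8Lattice w) :
    InE8Lattice (v - w) := by
  obtain ⟨hv, m, hm⟩ := hv
  obtain ⟨hw, n, hn⟩ := hw
  refine ⟨?_, m - n, by simp [Finset.sum_sub_distrib, hm, hn]; ring⟩
  rcases hv with hv | hv <;> rcases hw with hw | hw
  · exact .inl fun i => by
      obtain ⟨a, ha⟩ := hv i; obtain ⟨b, hb⟩ := hw i; exact ⟨a - b, by simp [ha, hb]⟩
  · exact .inr fun i => by
      obtain ⟨a, ha⟩ := hv i; obtain ⟨b, hb⟩ := hw i; exact ⟨a - b - 1, by simp [ha, hb]; ring⟩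
  · exact .inr fun i => by
      obtain ⟨a, ha⟩ := hv i; obtain ⟨b, hb⟩ := hw i; exact ⟨a - b, by simp [ha, hb]; ring⟩
  · exact .inl fun i => by
      obtain ⟨a, ha⟩ := hv i; obtain ⟨b, hb⟩ := hw i; exact ⟨a - b, by simp [ha, hb]⟩

lemma stdInner_sub_self (v w : V8) :
    stdInner (v - w) (v - w) = stdInner v v - 2 * stdInner v w + stdInner w w := by
  simp only [stdInner, Fin.sum_univ_eight, Pi.sub_apply]
  ring

lemma IsE8Root.sub {v w : V8} (hv : IsE8Root v) (hw : IsE8Root w) (hvw : stdInner v w = 1) :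
    IsE8Root (v - w) := by
  rw [isE8Root_iff] at *
  exact ⟨by rw [stdInner_sub_self, hv.1, hw.1, hvw]; norm_num, hv.2.sub hw.2⟩

lemma hasCoords_sub {u v : V8} {c d : Fin 8 → ℚ} (hu : HasCoords u c) (hv : HasCoords v d) :
    HasCoords (u - v) (c - d) := by
  rw [HasCoords, hu, hv, ← Finset.sum_sub_distrib]
  simp [sub_smul]

lemma hasCoords_deltaE8 : HasCoords deltaE8 ![2, 3, 4, 6, 5, 4, 3, 2] := by
  funext j
  fin_cases j <;> simp [simpleRoot, deltaE8, Fin.sum_univ_eight] <;> norm_num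

/-- δ is the fundamental weight dual to α₈. -/
lemma stdInner_deltaE8_of_hasCoords {v : V8} {c : Fin 8 → ℚ} (hc : HasCoords v c) :
    stdInner deltaE8 v = c 7 := by
  rw [hc]
  simp [stdInner, simpleRoot, deltaE8, Fin.sum_univ_eight]
  ring

lemma isE8Root_deltaE8 : IsE8Root deltaE8 := by
  refine ⟨by simp [stdInner, deltaE8, Fin.sum_univ_eight]; norm_num,
    .inl fun i => ?_, 1, by simp [deltaE8, Fin.sum_univ_eight]; norm_num⟩
  fin_cases i
  exacts [⟨0, rfl⟩, ⟨0, rfl⟩, ⟨0, rfl⟩, ⟨0, rfl⟩, ⟨0, rfl⟩, ⟨0, rfl⟩, ⟨1, rfl⟩, ⟨1, rfl⟩]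

lemma deltaE8_sub_mem_lambdaE7 {v : V8} (hv : v ∈ LambdaE7) : deltaE8 - v ∈ LambdaE7 := by
  obtain ⟨hroot, c, hc, hc7⟩ := hv
  refine ⟨isE8Root_deltaE8.sub hroot ?_, _, hasCoords_sub hasCoords_deltaE8 hc, ?_⟩
  · rw [stdInner_deltaE8_of_hasCoords hc, hc7]
  · simp [hc7]
    norm_num

lemma deltaE8_sub_mem_lambdaE7_iff {v : V8} : deltaE8 - v ∈ LambdaE7 ↔ v ∈ LambdaE7 :=
  ⟨fun h => by simpa using deltaE8_sub_mem_lambdaE7 h, deltaE8_sub_mem_lambdaE7⟩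

/-- for any root α of E₇ one has Ω(−α) = {δ − λ : λ ∈ Ω(α)}. -/
theorem omega_neg :
    ∀ a ∈ E7, Omega (-a) = (fun l => deltaE8 - l) '' (Omega a) := by
  intro a _
  have hinv : Function.LeftInverse (deltaE8 - ·) (deltaE8 - ·) := fun l => sub_sub_cancel _ _
  rw [Set.image_eq_preimage_of_inverse hinv hinv]
  ext m
  simp only [Omega, Set.mem_preimage, Set.mem_ofPred_eq, sub_sub, deltaE8_sub_mem_lambdaE7_iff,
    sub_neg_eq_add]
end

section
/- Let Λ be the set of roots of E₈ with α₈-coefficient 1, and define the distance d(λ,μ) between λ,μ ∈ Λ by: d = 0 if (λ,μ) = 1, d = 1 if (λ,μ) = 1/2, d = 2 if (λ,μ) = 0, d = 3 if (λ,μ) = −1/2 (inner product normalized so all roots have length 1). Then for each λ ∈ Λ: the number of μ with d(λ,μ)=1 is 27, with d(λ,μ)=2 is 27, and with d(λ,μ)=3 is 1. -/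
open Finset

/-! Since `deltaE8` is the fundamental weight dual to α₈, the α₈-coefficient of `v` is
`⟨v, deltaE8⟩ = v₆ + v₇`. A root `v` has `2v` integral with all entries in `{-2, 0, 2}` or all
in `{-1, 1}`, so `2Λ` is cut out of two small boxes and equals an explicit set of 56 vectors;
the three counts are then a finite computation over these 56 vectors. -/

lemma stdInner_eq_dotProduct (x y : V8) : stdInner x y = x ⬝ᵥ y := rfl

lemma stdInner_simpleRoot_deltaE8 (i : Fin 8) :
    stdInner (simpleRoot i) deltaE8 = if i = 7 then 1 else 0 := by
  fin_cases i <;> simp [stdInner, simpleRoot, deltaE8, Fin.sum_univ_eight, neg_div]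

lemma HasCoords.coeff_seven {v : V8} {c : Fin 8 → ℚ} (h : HasCoords v c) :
    c 7 = v 6 + v 7 := by
  have hδ : stdInner v deltaE8 = v 6 + v 7 := by
    simp [stdInner, deltaE8, Fin.sum_univ_eight]
  rw [← hδ, h, stdInner_eq_dotProduct, sum_dotProduct]
  simp [smul_dotProduct, ← stdInner_eq_dotProduct, stdInner_simpleRoot_deltaE8]

def simpleRootCoords (v : V8) : Fin 8 → ℚ :=
  ![2 * v 7,
    (v 0 + v 1 + v 2 + v 3 + v 4 + v 5 + v 6 + 5 * v 7) / 2,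
    (-v 0 + v 1 + v 2 + v 3 + v 4 + v 5 + v 6 + 7 * v 7) / 2,
    v 2 + v 3 + v 4 + v 5 + v 6 + 5 * v 7,
    v 3 + v 4 + v 5 + v 6 + 4 * v 7,
    v 4 + v 5 + v 6 + 3 * v 7,
    v 5 + v 6 + 2 * v 7,
    v 6 + v 7]

lemma hasCoords_simpleRootCoords (v : V8) : HasCoords v (simpleRootCoords v) := by
  funext j
  fin_cases j <;>
    simp [simpleRootCoords, simpleRoot, Fin.sum_univ_eight, Finset.sum_apply] <;> ring

lemma mem_lambdaE7_iff {v : V8} : v ∈ LambdaE7 ↔ IsE8Root v ∧ v 6 + v 7 = 1 := by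
  refine and_congr_right fun _ => ⟨?_, fun h => ⟨_, hasCoords_simpleRootCoords v, h⟩⟩
  rintro ⟨c, hc, hc7⟩
  rw [← hc.coeff_seven, hc7]

def half (u : Fin 8 → ℤ) : V8 := fun i => (u i : ℚ) / 2

lemma half_injective : Function.Injective half := fun u w h => funext fun i => by
  have := congrFun h i
  simp only [half, div_left_inj' two_ne_zero (G₀ := ℚ), Int.cast_inj] at this
  exact this

lemma stdInner_half (u w : Fin 8 → ℤ) : stdInner (half u) (half w) = (u ⬝ᵥ w : ℤ) / 4 := by
  simp only [stdInner, half, dotProduct, Int.cast_sum, Int.cast_mul, Finset.sum_div]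
  exact Finset.sum_congr rfl fun i _ => by ring

lemma nip_half (u w : Fin 8 → ℤ) : nip (half u) (half w) = (u ⬝ᵥ w : ℤ) / 8 := by
  rw [nip, stdInner_half]; ring

lemma exists_intCast_eq_div_two_iff (m : ℤ) : (∃ n : ℤ, (m : ℚ) / 2 = n) ↔ Even m := by
  refine ⟨fun ⟨n, hn⟩ => ⟨n, ?_⟩, fun ⟨n, hn⟩ => ⟨n, ?_⟩⟩
  · have : (m : ℚ) = n + n := by linarith
    exact_mod_cast this
  · rw [hn]; push_cast; ring

lemma exists_intCast_add_half_eq_div_two_iff (m : ℤ) :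
    (∃ n : ℤ, (m : ℚ) / 2 = n + 1 / 2) ↔ Odd m := by
  refine ⟨fun ⟨n, hn⟩ => ⟨n, ?_⟩, fun ⟨n, hn⟩ => ⟨n, ?_⟩⟩
  · have : (m : ℚ) = 2 * n + 1 := by linarith
    exact_mod_cast this
  · rw [hn]; push_cast; ring

lemma exists_div_two_eq_two_mul_iff (m : ℤ) : (∃ n : ℤ, (m : ℚ) / 2 = 2 * n) ↔ 4 ∣ m := by
  refine ⟨fun ⟨n, hn⟩ => ⟨n, ?_⟩, fun ⟨n, hn⟩ => ⟨n, ?_⟩⟩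
  · have : (m : ℚ) = 4 * n := by linarith
    exact_mod_cast this
  · rw [hn]; push_cast; ring

def IsDoubledRoot (u : Fin 8 → ℤ) : Prop :=
  u ⬝ᵥ u = 8 ∧ ((∀ i, Even (u i)) ∨ ∀ i, Odd (u i)) ∧ 4 ∣ ∑ i, u i

instance : DecidablePred IsDoubledRoot := fun u => by unfold IsDoubledRoot; infer_instance

lemma isE8Root_half_iff (u : Fin 8 → ℤ) : IsE8Root (half u) ↔ IsDoubledRoot u := by
  have hsum : ∑ i, half u i = ((∑ i, u i : ℤ) : ℚ) / 2 := by
    simp only [half, Int.cast_sum, Finset.sum_div]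
  simp only [IsE8Root, IsDoubledRoot, stdInner_half, hsum, exists_div_two_eq_two_mul_iff]
  simp only [half, exists_intCast_eq_div_two_iff, exists_intCast_add_half_eq_div_two_iff]
  refine and_congr_left' ⟨fun h => ?_, fun h => by rw [h]; norm_num⟩
  have : ((u ⬝ᵥ u : ℤ) : ℚ) = 8 := by linarith
  exact_mod_cast this

lemma exists_half_eq {v : V8}
    (h : (∀ i, ∃ n : ℤ, v i = n) ∨ (∀ i, ∃ n : ℤ, v i = n + 1 / 2)) : ∃ u, half u = v := by
  rcases h with h | h <;> choose n hn using h
  · exact ⟨fun i => 2 * n i, funext fun i => by simp [half, hn]⟩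
  · exact ⟨fun i => 2 * n i + 1, funext fun i => by simp [half, hn]; ring⟩

lemma IsDoubledRoot.mem_piFinset {u : Fin 8 → ℤ} (h : IsDoubledRoot u) :
    u ∈ Fintype.piFinset (fun _ => {-2, 0, 2}) ∨ u ∈ Fintype.piFinset (fun _ => {-1, 1}) := by
  obtain ⟨hsq, hpar, -⟩ := h
  have hbound (i : Fin 8) : -2 ≤ u i ∧ u i ≤ 2 := by
    have : u i * u i ≤ 8 :=
      hsq ▸ single_le_sum (fun j _ => mul_self_nonneg (u j)) (mem_univ i)
    constructor <;> nlinarith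
  simp only [Fintype.mem_piFinset, mem_insert, mem_singleton]
  rcases hpar with h | h
  · exact .inl fun i => by obtain ⟨r, hr⟩ := h i; have := hbound i; omega
  · exact .inr fun i => by obtain ⟨r, hr⟩ := h i; have := hbound i; omega

/-- Twice Λ: the 24 vectors `±2eᵢ + 2eⱼ` with `i < 6`, `j ∈ {6, 7}`, and the 32 vectors
`(±1, …, ±1, 1, 1)` with an even number of minus signs. -/
def doubledLambda : Finset (Fin 8 → ℤ) :=
  ((univ ×ˢ {-2, 2} ×ˢ {6, 7} : Finset (Fin 6 × ℤ × Fin 8)).image fun x =>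
      Pi.single (Fin.castAdd 2 x.1) x.2.1 + Pi.single x.2.2 2) ∪
    (Fintype.piFinset fun i : Fin 8 => if i < 6 then {-1, 1} else {1}).filter
      fun u => 4 ∣ ∑ i, u i

set_option maxRecDepth 10000 in
lemma mem_doubledLambda_iff {u : Fin 8 → ℤ} :
    u ∈ doubledLambda ↔ IsDoubledRoot u ∧ u 6 + u 7 = 2 := by
  have sound : ∀ w ∈ doubledLambda, IsDoubledRoot w ∧ w 6 + w 7 = 2 := by decide +kernel
  have even_complete : ∀ w ∈ Fintype.piFinset (fun _ => {-2, 0, 2}),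
      w 6 + w 7 = 2 → IsDoubledRoot w → w ∈ doubledLambda := by decide +kernel
  have odd_complete : ∀ w ∈ Fintype.piFinset (fun _ => {-1, 1}),
      w 6 + w 7 = 2 → IsDoubledRoot w → w ∈ doubledLambda := by decide +kernel
  refine ⟨sound u, fun ⟨hu, h67⟩ => ?_⟩
  rcases hu.mem_piFinset with h | h
  exacts [even_complete u h h67 hu, odd_complete u h h67 hu]

lemma half_mem_lambdaE7_iff {u : Fin 8 → ℤ} : half u ∈ LambdaE7 ↔ u ∈ doubledLambda := by
  have h67 : half u 6 + half u 7 = 1 ↔ u 6 + u 7 = 2 := by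
    simp only [half, ← add_div, div_eq_one_iff_eq (two_ne_zero (α := ℚ))]
    exact_mod_cast Iff.rfl
  rw [mem_lambdaE7_iff, isE8Root_half_iff, h67, mem_doubledLambda_iff]

lemma lambdaE7_eq_image_half : LambdaE7 = half '' doubledLambda := by
  ext v
  refine ⟨fun hv => ?_, ?_⟩
  · obtain ⟨u, rfl⟩ := exists_half_eq (mem_lambdaE7_iff.mp hv).1.2.1
    exact ⟨u, half_mem_lambdaE7_iff.mp hv, rfl⟩
  · rintro ⟨u, hu, rfl⟩
    exact half_mem_lambdaE7_iff.mpr hu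

lemma ncard_nip_half_eq (u : Fin 8 → ℤ) (k : ℤ) :
    {m | m ∈ LambdaE7 ∧ nip (half u) m = k / 8}.ncard = #{w ∈ doubledLambda | u ⬝ᵥ w = k} := by
  have : {m | m ∈ LambdaE7 ∧ nip (half u) m = k / 8} =
      half '' ↑{w ∈ doubledLambda | u ⬝ᵥ w = k} := by
    ext m
    simp only [lambdaE7_eq_image_half, Set.mem_ofPred_eq, Set.mem_image, coe_filter]
    constructor
    · rintro ⟨⟨w, hw, rfl⟩, h⟩
      refine ⟨w, ⟨hw, ?_⟩, rfl⟩
      rw [nip_half, div_left_inj' (by norm_num)] at h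
      exact_mod_cast h
    · rintro ⟨w, ⟨hw, h⟩, rfl⟩
      exact ⟨⟨w, hw, rfl⟩, by rw [nip_half, h]⟩
  rw [this, Set.ncard_image_of_injective _ half_injective, Set.ncard_coe_finset]

lemma card_doubledLambda_filter_dotProduct :
    ∀ u ∈ doubledLambda,
      #{w ∈ doubledLambda | u ⬝ᵥ w = 4} = 27 ∧
      #{w ∈ doubledLambda | u ⬝ᵥ w = 0} = 27 ∧
      #{w ∈ doubledLambda | u ⬝ᵥ w = -4} = 1 := by
  decide +kernel

/-- for each λ ∈ Λ, there are 27 weights at distance 1 (inner product 1/2),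
27 at distance 2 (inner product 0), and exactly 1 at distance 3 (inner product −1/2). -/
theorem distance_counts :
    ∀ l ∈ LambdaE7,
      {m | m ∈ LambdaE7 ∧ nip l m = 1/2}.ncard = 27 ∧
      {m | m ∈ LambdaE7 ∧ nip l m = 0}.ncard = 27 ∧
      {m | m ∈ LambdaE7 ∧ nip l m = -1/2}.ncard = 1 := by
  intro l hl
  rw [lambdaE7_eq_image_half] at hl
  obtain ⟨u, hu, rfl⟩ := hl
  obtain ⟨h1, h2, h3⟩ := card_doubledLambda_filter_dotProduct u hu
  refine ⟨?_, ?_, ?_⟩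
  · rw [show (1 / 2 : ℚ) = (4 : ℤ) / 8 by norm_num, ncard_nip_half_eq, h1]
  · rw [show (0 : ℚ) = (0 : ℤ) / 8 by norm_num, ncard_nip_half_eq, h2]
  · rw [show (-1 / 2 : ℚ) = (-4 : ℤ) / 8 by norm_num, ncard_nip_half_eq, h3]
end

section
/- Let Φ be the root system E₇ embedded in E₈ as the roots of α₈-coefficient 0, Λ the roots of α₈-coefficient 1, and δ the highest root of E₈. For a root α ∈ Φ, each pair of orthogonal weights {λ, μ} ⊆ Ω(α) with λ + μ = δ + α satisfies: for any root γ ∈ Φ with (α,γ) = −1 or −1/2 (length-1 normalization), neither (λ,γ) nor (μ,γ) equals 1/2. -/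
/-!
Two roots of E₈ with inner product −1 are opposite, and every λ ∈ Ω(α) has (λ,α) = 1/2.
If (α,γ) = −1 then γ = −α, so (λ,γ) = −1/2. If (α,γ) = −1/2 and (λ,γ) = 1/2, then
μ = δ + α − λ has (μ,γ) = −1/2 − 1/2 = −1, so γ = −μ; but γ ∈ Φ is orthogonal to δ while
(μ,δ) = 1/2. The roles of λ and μ are symmetric.
-/

open Finset

theorem eq_neg_of_dotProduct_eq_neg {ι R : Type*} [Fintype ι] [CommRing R] [LinearOrder R]
    [IsStrictOrderedRing R] {x y : ι → R} {c : R} (hx : x ⬝ᵥ x = c) (hy : y ⬝ᵥ y = c)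
    (hxy : x ⬝ᵥ y = -c) : y = -x := by
  have hsum : (x + y) ⬝ᵥ (x + y) = 0 := by
    simp only [add_dotProduct, dotProduct_add, dotProduct_comm y x, hx, hy, hxy]
    ring
  exact eq_neg_of_add_eq_zero_right (dotProduct_self_eq_zero.mp hsum)

section nip

variable (x y z : V8)

lemma nip_eq_dotProduct : nip x y = x ⬝ᵥ y / 2 := rfl

lemma nip_comm : nip x y = nip y x := by
  simp only [nip_eq_dotProduct, dotProduct_comm]

lemma nip_add_left : nip (x + y) z = nip x z + nip y z := by
  simp only [nip_eq_dotProduct, add_dotProduct, add_div]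

lemma nip_sub_left : nip (x - y) z = nip x z - nip y z := by
  simp only [nip_eq_dotProduct, sub_dotProduct, sub_div]

lemma nip_sub_right : nip x (y - z) = nip x y - nip x z := by
  simp only [nip_eq_dotProduct, dotProduct_sub, sub_div]

lemma nip_neg_left : nip (-x) y = -nip x y := by
  simp only [nip_eq_dotProduct, neg_dotProduct, neg_div]

lemma nip_neg_right : nip x (-y) = -nip x y := by
  simp only [nip_eq_dotProduct, dotProduct_neg, neg_div]

end nip

lemma eq_neg_of_nip_eq_neg_one {x y : V8} (hx : nip x x = 1) (hy : nip y y = 1)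
    (hxy : nip x y = -1) : y = -x := by
  simp only [nip_eq_dotProduct] at hx hy hxy
  exact eq_neg_of_dotProduct_eq_neg (c := 2) (by linarith) (by linarith) (by linarith)

lemma nip_eq_half_of_nip_sub_self {x y : V8} (hx : nip x x = 1) (hy : nip y y = 1)
    (hxy : nip (x - y) (x - y) = 1) : nip x y = 1 / 2 := by
  rw [nip_sub_left, nip_sub_right, nip_sub_right, nip_comm y x] at hxy
  linarith

lemma IsE8Root.nip_self {v : V8} (h : IsE8Root v) : nip v v = 1 := by
  rw [nip, h.1]
  norm_num

/- `δ` is orthogonal to `α₁, …, α₇` and `(α₈, δ) = 1/2`. -/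
lemma HasCoords.nip_deltaE8 {v : V8} {c : Fin 8 → ℚ} (h : HasCoords v c) :
    nip v deltaE8 = c 7 / 2 := by
  rw [h]
  simp [nip, stdInner, deltaE8, simpleRoot, Fin.sum_univ_succ, Finset.sum_apply, neg_div]

lemma nip_deltaE8_of_mem_LambdaE7 {v : V8} (h : v ∈ LambdaE7) : nip v deltaE8 = 1 / 2 := by
  obtain ⟨-, c, hc, hc7⟩ := h
  rw [hc.nip_deltaE8, hc7]

lemma nip_deltaE8_of_mem_E7 {v : V8} (h : v ∈ E7) : nip v deltaE8 = 0 := by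
  obtain ⟨-, c, hc, hc7⟩ := h
  rw [hc.nip_deltaE8, hc7, zero_div]

lemma nip_of_mem_Omega {a l : V8} (ha : IsE8Root a) (hl : l ∈ Omega a) : nip l a = 1 / 2 :=
  nip_eq_half_of_nip_sub_self hl.1.1.nip_self ha.nip_self hl.2.1.nip_self

lemma nip_ne_half_of_mem_Omega {a l m g : V8} (ha : IsE8Root a) (hl : l ∈ Omega a)
    (hm : m ∈ LambdaE7) (hsum : l + m = deltaE8 + a) (hg : g ∈ E7)
    (hag : nip a g = -1 ∨ nip a g = -1 / 2) : nip l g ≠ 1 / 2 := by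
  intro hlg
  rcases hag with hag | hag
  · have hga : g = -a := eq_neg_of_nip_eq_neg_one ha.nip_self hg.1.nip_self hag
    rw [hga, nip_neg_right, nip_of_mem_Omega ha hl] at hlg
    norm_num at hlg
  · have hmg : nip m g = -1 := by
      rw [show m = deltaE8 + a - l by rw [← hsum]; abel, nip_sub_left, nip_add_left,
        nip_comm deltaE8, nip_deltaE8_of_mem_E7 hg, hag, hlg]
      norm_num
    have hgm : g = -m := eq_neg_of_nip_eq_neg_one hm.1.nip_self hg.1.nip_self hmg
    have hgδ := nip_deltaE8_of_mem_E7 hg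
    rw [hgm, nip_neg_left, nip_deltaE8_of_mem_LambdaE7 hm] at hgδ
    norm_num at hgδ

/-- for a root α of E₇ and a pair of orthogonal weights {λ,μ} ⊆ Ω(α)
with λ + μ = δ + α, any root γ of E₇ with (α,γ) = −1 or −1/2 satisfies
(λ,γ) ≠ 1/2 and (μ,γ) ≠ 1/2. -/
theorem omega_pair_no_shift :
    ∀ a ∈ E7, ∀ l ∈ Omega a, ∀ m ∈ Omega a,
      nip l m = 0 → l + m = deltaE8 + a →
        ∀ g ∈ E7, (nip a g = -1 ∨ nip a g = -1/2) →
          nip l g ≠ 1/2 ∧ nip m g ≠ 1/2 := by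
  intro a ha l hl m hm _ hsum g hg hag
  exact ⟨nip_ne_half_of_mem_Omega ha.1 hl hm.1 hsum hg hag,
    nip_ne_half_of_mem_Omega ha.1 hm hl.1 (by rw [add_comm, hsum]) hg hag⟩
end
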